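/- arXiv:1607.02032 — 4 statements merged into one kernel-verified Lean document; each statement's English description precedes it below -/
import Mathlib

section
/- Let F be a field. In K_2(2,F), for all t,v∈F^* and every integer m we have {t^{2m},v}={t²,v}^m. -/
/-!
Common definitions: presentations of the abelian groups `K₂(F)`, `K₂(2,F)` and `K₂(A,F)`
(Rehmann–Morita).  "The abelian group generated by symbols subject to relations" is
formalized as the abelianization of the corresponding presented group.
-/

variable (F : Type) [Field F]

/-- Relators for `K₂(F)`: the Steinberg symbol relations (A1)-(A3).
(A3) `{u, 1-u} = 1` (for `u ≠ 1`) is encoded as: for units `u, w` with `(w : F) = 1 - u`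
(which forces `u ≠ 1`), `{u, w}` is a relator. -/
def K2Rels : Set (FreeGroup (Fˣ × Fˣ)) :=
  {r | (∃ t u v : Fˣ, r = FreeGroup.of (t * u, v) * (FreeGroup.of (t, v) * FreeGroup.of (u, v))⁻¹) ∨
       (∃ t u v : Fˣ, r = FreeGroup.of (t, u * v) * (FreeGroup.of (t, u) * FreeGroup.of (t, v))⁻¹) ∨
       (∃ u w : Fˣ, (w : F) = 1 - (u : F) ∧ r = FreeGroup.of (u, w))}

/-- `K₂(F)`: the abelian group generated by the symbols `{u,v}`, `u v ∈ Fˣ`,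
subject to the Steinberg symbol relations (A1)-(A3). -/
def K2 : Type := Abelianization (PresentedGroup (K2Rels F))

noncomputable instance : CommGroup (K2 F) := inferInstanceAs (CommGroup (Abelianization _))

/-- The Steinberg symbol `{u,v}` in `K₂(F)`. -/
def K2.sym (u v : Fˣ) : K2 F := Abelianization.of (PresentedGroup.of (u, v))

/-- The subgroup `m·K₂(F)` of `m`-th powers of elements of `K₂(F)`. -/
noncomputable def K2.powSubgroup (m : ℕ) : Subgroup (K2 F) := Subgroup.closure {x | ∃ y : K2 F, x = y ^ m}

/-- Relators for `K₂(2,F)`: the Steinberg cocycle relations (B1)-(B4). -/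
def K2SLRels : Set (FreeGroup (Fˣ × Fˣ)) :=
  {r | (∃ t u v : Fˣ, r = FreeGroup.of (t, u) * FreeGroup.of (t * u, v) *
          (FreeGroup.of (t, u * v) * FreeGroup.of (u, v))⁻¹) ∨
       (r = FreeGroup.of ((1 : Fˣ), (1 : Fˣ))) ∨
       (∃ u v : Fˣ, r = FreeGroup.of (u, v) * (FreeGroup.of (u⁻¹, v⁻¹))⁻¹) ∨
       (∃ u v w : Fˣ, (w : F) = 1 - (u : F) ∧
          r = FreeGroup.of (u, v) * (FreeGroup.of (u, w * v))⁻¹)}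

/-- `K₂(2,F)`: the abelian group generated by the symbols `{u,v}`, `u v ∈ Fˣ`,
subject to the Steinberg cocycle relations (B1)-(B4). -/
def K2SL : Type := Abelianization (PresentedGroup (K2SLRels F))

noncomputable instance : CommGroup (K2SL F) := inferInstanceAs (CommGroup (Abelianization _))

/-- The Steinberg cocycle `{u,v}` in `K₂(2,F)`. -/
def K2SL.sym (u v : Fˣ) : K2SL F := Abelianization.of (PresentedGroup.of (u, v))

/-- The subgroup `m⟨{u²,v}⟩` of `K₂(2,F)` generated by the elements `{u²,v}^m`, `u v ∈ Fˣ`. -/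
noncomputable def K2SL.sqSubgroup (m : ℤ) : Subgroup (K2SL F) :=
  Subgroup.closure {x | ∃ u v : Fˣ, x = (K2SL.sym F (u ^ 2) v) ^ m}

/-- A generalized Cartan matrix: `a_{ii} = 2`, off-diagonal entries `≤ 0`,
and `a_{ij} = 0 ↔ a_{ji} = 0`. -/
def IsGCM {n : ℕ} (A : Matrix (Fin n) (Fin n) ℤ) : Prop :=
  (∀ i, A i i = 2) ∧ (∀ i j, i ≠ j → A i j ≤ 0) ∧ (∀ i j, A i j = 0 ↔ A j i = 0)

/-- Relators for `K₂(A,F)`: the Rehmann–Morita relations (L1)-(L7). -/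
def K2ARels {n : ℕ} (A : Matrix (Fin n) (Fin n) ℤ) : Set (FreeGroup (Fin n × Fˣ × Fˣ)) :=
  {r | (∃ (i : Fin n) (t u v : Fˣ),
          r = FreeGroup.of (i, t, u) * FreeGroup.of (i, t * u, v) *
              (FreeGroup.of (i, t, u * v) * FreeGroup.of (i, u, v))⁻¹) ∨
       (∃ i : Fin n, r = FreeGroup.of (i, 1, 1)) ∨
       (∃ (i : Fin n) (u v : Fˣ),
          r = FreeGroup.of (i, u, v) * (FreeGroup.of (i, u⁻¹, v⁻¹))⁻¹) ∨
       (∃ (i : Fin n) (u v w : Fˣ), (w : F) = 1 - (u : F) ∧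
          r = FreeGroup.of (i, u, v) * (FreeGroup.of (i, u, w * v))⁻¹) ∨
       (∃ (i j : Fin n) (u v : Fˣ), i ≠ j ∧
          r = FreeGroup.of (i, u, v ^ (A j i)) * (FreeGroup.of (j, u ^ (A i j), v))⁻¹) ∨
       (∃ (i j : Fin n) (t u v : Fˣ), i ≠ j ∧
          r = FreeGroup.of (i, t * u, v ^ (A j i)) *
              (FreeGroup.of (i, t, v ^ (A j i)) * FreeGroup.of (i, u, v ^ (A j i)))⁻¹) ∨
       (∃ (i j : Fin n) (t u v : Fˣ), i ≠ j ∧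
          r = FreeGroup.of (i, t ^ (A j i), u * v) *
              (FreeGroup.of (i, t ^ (A j i), u) * FreeGroup.of (i, t ^ (A j i), v))⁻¹)}

/-- `K₂(A,F)`: the abelian group generated by the symbols `c_i(u,v)` subject to (L1)-(L7). -/
def K2A {n : ℕ} (A : Matrix (Fin n) (Fin n) ℤ) : Type :=
  Abelianization (PresentedGroup (K2ARels F A))

noncomputable instance {n : ℕ} (A : Matrix (Fin n) (Fin n) ℤ) : CommGroup (K2A F A) :=
  inferInstanceAs (CommGroup (Abelianization _))

/-- The generator `c_i(u,v)` of `K₂(A,F)`. -/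
def K2A.c {n : ℕ} (A : Matrix (Fin n) (Fin n) ℤ) (i : Fin n) (u v : Fˣ) : K2A F A :=
  Abelianization.of (PresentedGroup.of (i, u, v))

open scoped Classical in
/-- `LGroup F p` is `K₂(F)` when `p` holds and `K₂(2,F)` otherwise.  Taking
`p = "the i-th column of A has an odd entry"` gives the factor `L_i`. -/
noncomputable def LGroup (p : Prop) : Type :=
  Abelianization (PresentedGroup (if p then K2Rels F else K2SLRels F))

noncomputable instance (p : Prop) : CommGroup (LGroup F p) :=
  inferInstanceAs (CommGroup (Abelianization _))

/-- The symbol `{u,v}` (Steinberg symbol resp. cocycle) in `LGroup F p`. -/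
noncomputable def LGroup.sym (p : Prop) (u v : Fˣ) : LGroup F p :=
  Abelianization.of (PresentedGroup.of (u, v))

/-- Relators `x_i^{a_{ji}} = x_j^{a_{ij}}` (`i < j`) for the auxiliary abelian group `G`. -/
def GRels {n : ℕ} (A : Matrix (Fin n) (Fin n) ℤ) : Set (FreeGroup (Fin n)) :=
  {r | ∃ i j : Fin n, i < j ∧ r = FreeGroup.of i ^ (A j i) * (FreeGroup.of j ^ (A i j))⁻¹}

/-- The abelian group `G = ⟨x_1,…,x_n ∣ x_i^{a_{ji}} = x_j^{a_{ij}}, [x_i,x_j] = 1⟩`. -/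
def GGroup {n : ℕ} (A : Matrix (Fin n) (Fin n) ℤ) : Type :=
  Abelianization (PresentedGroup (GRels A))

noncomputable instance {n : ℕ} (A : Matrix (Fin n) (Fin n) ℤ) : CommGroup (GGroup A) :=
  inferInstanceAs (CommGroup (Abelianization _))

/-!
For a Steinberg cocycle `c`, relation (B4) applied to `u` and, through (B3), to `u⁻¹` gives
`c(u,v) = c(u,-uv)`, because `(1-u)/(1-u⁻¹) = -u`. Feeding this into the cocycle identity for
`(x⁻¹, x, v⁻¹)` and `(x, x, v)` shows that for a square `s` the map `v ↦ c(s,v)` is odd and satisfies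
`c(s,sv) = c(s,s) + c(s,v)`. The cocycle identity for `(sᵏ, s, v)` then gives `c(sᵏ,v) = k·c(s,v)` by
induction on `k`, and (B3) extends this to negative `k`.
-/

structure IsSteinbergCocycle {F : Type*} [Field F] {A : Type*} [AddCommGroup A]
    (c : Fˣ → Fˣ → A) : Prop where
  cocycle (t u v : Fˣ) : c t u + c (t * u) v = c t (u * v) + c u v
  one_one : c 1 1 = 0
  map_inv_inv (u v : Fˣ) : c u v = c u⁻¹ v⁻¹
  one_sub_mul_right (u v w : Fˣ) : (w : F) = 1 - u → c u v = c u (w * v)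

namespace IsSteinbergCocycle

variable {K : Type*} [Field K] {A : Type*} [AddCommGroup A] {c : Kˣ → Kˣ → A}

theorem one_left (hc : IsSteinbergCocycle c) (v : Kˣ) : c 1 v = 0 := by
  have h := hc.cocycle 1 1 v
  rw [one_mul, one_mul, hc.one_one, zero_add] at h
  exact add_eq_right.mp h.symm

theorem inv_left (hc : IsSteinbergCocycle c) (u v : Kˣ) : c u⁻¹ v = c u v⁻¹ := by
  rw [hc.map_inv_inv u v⁻¹, inv_inv]

theorem neg_mul_right (hc : IsSteinbergCocycle c) (u v : Kˣ) : c u (-u * v) = c u v := by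
  rcases eq_or_ne u 1 with rfl | hu
  · rw [hc.one_left, hc.one_left]
  have hu' : (u : K) ≠ 1 := Units.val_eq_one.not.mpr hu
  let w : Kˣ := Units.mk0 (1 - (u : K)) (sub_ne_zero.mpr hu'.symm)
  let w' : Kˣ := Units.mk0 (1 - (u : K)⁻¹) (sub_ne_zero.mpr (inv_ne_one.mpr hu').symm)
  have hww' : w * w'⁻¹ = -u := by
    ext
    have : (u : K) ≠ 0 := u.ne_zero
    simp only [w, w', Units.val_mul, Units.val_inv_eq_inv_val, Units.val_mk0, Units.val_neg]
    field_simp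
    ring
  symm
  calc c u v = c u⁻¹ v⁻¹ := hc.map_inv_inv u v
    _ = c u⁻¹ (w' * v⁻¹) := hc.one_sub_mul_right _ _ _ (by simp [w'])
    _ = c u (w'⁻¹ * v) := by rw [hc.inv_left, mul_inv, inv_inv]
    _ = c u (w * (w'⁻¹ * v)) := hc.one_sub_mul_right _ _ _ rfl
    _ = c u (-u * v) := by rw [← mul_assoc, hww']

theorem self_mul_right (hc : IsSteinbergCocycle c) (u v : Kˣ) : c u (u * v) = c u (-v) := by
  simpa using hc.neg_mul_right u (-v)

theorem self_right (hc : IsSteinbergCocycle c) (u : Kˣ) : c u u = c u (-1) := by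
  simpa using hc.self_mul_right u 1

theorem self_mul_right_add_inv_right (hc : IsSteinbergCocycle c) (u v : Kˣ) :
    c u (u * v) + c u v⁻¹ = c u (-1) := by
  have h := hc.cocycle u⁻¹ u v⁻¹
  have h₁ : c u⁻¹ u = c u (-1) := by
    simpa using (hc.inv_left u u).trans (hc.neg_mul_right u u⁻¹).symm
  have h₂ : c u⁻¹ (u * v⁻¹) = c u (u * v) := by
    rw [hc.inv_left, mul_inv, inv_inv, hc.self_mul_right, ← hc.neg_mul_right u (u⁻¹ * v)]
    simp
  rwa [inv_mul_cancel, hc.one_left, add_zero, h₁, h₂, eq_comm] at h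

theorem sq_left (hc : IsSteinbergCocycle c) (u v : Kˣ) :
    c (u ^ 2) v = c u (u * v) + c u v - c u u := by
  rw [pow_two, eq_sub_iff_add_eq, add_comm]
  exact hc.cocycle u u v

theorem sq_inv_right (hc : IsSteinbergCocycle c) (u v : Kˣ) :
    c (u ^ 2) v⁻¹ = -c (u ^ 2) v := by
  have h₁ := hc.self_mul_right_add_inv_right u v
  have h₂ := hc.self_mul_right_add_inv_right u v⁻¹
  rw [inv_inv] at h₂
  rw [eq_neg_iff_add_eq_zero, hc.sq_left, hc.sq_left, hc.self_right]
  calc _ = (c u (u * v) + c u v⁻¹) + (c u (u * v⁻¹) + c u v) - c u (-1) - c u (-1) := by abel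
    _ = 0 := by rw [h₁, h₂]; abel

theorem sq_mul_right (hc : IsSteinbergCocycle c) (u v : Kˣ) :
    c (u ^ 2) (u ^ 2 * v) = c (u ^ 2) (u ^ 2) + c (u ^ 2) v := by
  rw [hc.self_right, ← hc.self_mul_right_add_inv_right (u ^ 2) v, hc.sq_inv_right]
  abel

theorem pow_left {s : Kˣ} (hc : IsSteinbergCocycle c)
    (hs : ∀ v, c s (s * v) = c s s + c s v) (k : ℕ) (v : Kˣ) : c (s ^ k) v = k • c s v := by
  induction k generalizing v with
  | zero => rw [pow_zero, hc.one_left, zero_smul]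
  | succ k ih =>
    have h := hc.cocycle (s ^ k) s v
    rw [← pow_succ, ih, ih, hs, smul_add] at h
    rw [succ_nsmul]
    exact add_left_cancel (h.trans (add_assoc _ _ _))

theorem zpow_left {s : Kˣ} (hc : IsSteinbergCocycle c)
    (hs : ∀ v, c s (s * v) = c s s + c s v) (hs_inv : ∀ v, c s v⁻¹ = -c s v) (m : ℤ) (v : Kˣ) :
    c (s ^ m) v = m • c s v := by
  obtain ⟨k, rfl | rfl⟩ := Int.eq_nat_or_neg m
  · rw [zpow_natCast, natCast_zsmul, hc.pow_left hs]
  · rw [zpow_neg, zpow_natCast, hc.inv_left, hc.pow_left hs, hs_inv, neg_smul, natCast_zsmul,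
      smul_neg]

theorem sq_zpow_left (hc : IsSteinbergCocycle c) (u : Kˣ) (m : ℤ) (v : Kˣ) :
    c ((u ^ 2) ^ m) v = m • c (u ^ 2) v :=
  hc.zpow_left (hc.sq_mul_right u) (hc.sq_inv_right u) m v

end IsSteinbergCocycle

namespace K2SL

noncomputable def mk : FreeGroup (Fˣ × Fˣ) →* K2SL F :=
  Abelianization.of.comp (PresentedGroup.mk (K2SLRels F))

theorem mk_of (u v : Fˣ) : mk F (FreeGroup.of (u, v)) = sym F u v := rfl

theorem mk_eq_mk_of_mul_inv_mem {x y : FreeGroup (Fˣ × Fˣ)} (h : x * y⁻¹ ∈ K2SLRels F) :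
    mk F x = mk F y :=
  congrArg Abelianization.of (PresentedGroup.mk_eq_mk_of_mul_inv_mem h)

theorem isSteinbergCocycle_ofMul_sym :
    IsSteinbergCocycle fun u v : Fˣ ↦ Additive.ofMul (sym F u v) where
  cocycle t u v := by
    have h := mk_eq_mk_of_mul_inv_mem F (Or.inl ⟨t, u, v, rfl⟩)
    simp only [map_mul, mk_of] at h
    simpa only [ofMul_mul] using congrArg Additive.ofMul h
  one_one := congrArg Additive.ofMul
    (congrArg Abelianization.of (PresentedGroup.one_of_mem (Or.inr (Or.inl rfl))))
  map_inv_inv u v := congrArg Additive.ofMul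
    (mk_eq_mk_of_mul_inv_mem F (Or.inr (Or.inr (Or.inl ⟨u, v, rfl⟩))))
  one_sub_mul_right u v w hw := congrArg Additive.ofMul
    (mk_eq_mk_of_mul_inv_mem F (Or.inr (Or.inr (Or.inr ⟨u, v, w, hw, rfl⟩))))

end K2SL

/-- In `K₂(2,F)`, `{t^{2m}, v} = {t², v}^m` for every integer `m`. -/
theorem K2SL.sym_even_pow (F : Type) [Field F] (t v : Fˣ) (m : ℤ) :
    K2SL.sym F (t ^ (2 * m)) v = (K2SL.sym F (t ^ 2) v) ^ m := by
  have h := (K2SL.isSteinbergCocycle_ofMul_sym F).sq_zpow_left t m v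
  rw [← zpow_natCast, ← zpow_mul] at h
  exact Additive.ofMul.injective h
end

section
/- Let F be a field. In K_2(2,F), for all t,u,v∈F^* and every integer k we have {tu,v^{2k}}={t,v^{2k}}{u,v^{2k}} and {t^{2k},uv}={t^{2k},u}{t^{2k},v}. -/
/-!
Common definitions: presentations of the abelian groups `K₂(F)`, `K₂(2,F)` and `K₂(A,F)`
(Rehmann–Morita).  "The abelian group generated by symbols subject to relations" is
formalized as the abelianization of the corresponding presented group.
-/

variable (F : Type) [Field F]

/-!
The key identity is `{x, y²} = {x, y}{y, x}⁻¹` for a Steinberg cocycle, obtained from (B1)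
applied to `(x, y, -xy)` once one knows `{a, -a v} = {a, v}` (a consequence of (B3) and (B4)).
The right-hand side is the commutator pairing of the central extension defined by the cocycle,
and the commutator pairing of a 2-cocycle on an abelian group is bimultiplicative. This gives
multiplicativity of `{·, y²}`, and (B1) turns multiplicativity of `{·, z}` into that of `{z, ·}`.
-/

def IsTwoCocycle {M G : Type*} [Mul M] [Mul G] (c : M → M → G) : Prop :=
  ∀ t u v, c t u * c (t * u) v = c t (u * v) * c u v

def commPairing {M G : Type*} [Div G] (c : M → M → G) (x y : M) : G :=
  c x y / c y x

namespace IsTwoCocycle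

variable {M G : Type*} {c : M → M → G}

theorem apply_one_right [Monoid M] [Group G] (hc : IsTwoCocycle c) (h11 : c 1 1 = 1) (a : M) :
    c a 1 = 1 := by
  simpa only [mul_one, h11, mul_eq_left] using hc a 1 1

theorem apply_one_left [Monoid M] [Group G] (hc : IsTwoCocycle c) (h11 : c 1 1 = 1) (a : M) :
    c 1 a = 1 := by
  simpa only [one_mul, h11, mul_eq_left] using (hc 1 1 a).symm

theorem commPairing_mul_left [CommMonoid M] [CommGroup G] (hc : IsTwoCocycle c) (p q y : M) :
    commPairing c (p * q) y = commPairing c p y * commPairing c q y := by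
  have h₁ := hc p q y
  have h₂ := hc y p q
  have h₃ := hc p y q
  rw [mul_comm y p] at h₂
  rw [mul_comm q y] at h₁
  simp only [commPairing, div_mul_div_comm, div_eq_div_iff_mul_eq_mul]
  apply mul_right_cancel (b := c p q * c (p * y) q)
  calc c (p * q) y * (c y p * c y q) * (c p q * c (p * y) q)
      = (c p q * c (p * q) y) * (c y p * c (p * y) q) * c y q := by ac_rfl
    _ = (c p (y * q) * c q y) * (c y (p * q) * c p q) * c y q := by rw [h₁, h₂]
    _ = (c p y * c (p * y) q) * c q y * c y (p * q) * c p q := by rw [h₃]; ac_rfl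
    _ = c p y * c q y * c y (p * q) * (c p q * c (p * y) q) := by ac_rfl

theorem apply_mul_right_of_apply_mul_left [CommMonoid M] [CommGroup G] (hc : IsTwoCocycle c)
    {z : M} (hz : ∀ p q, c (p * q) z = c p z * c q z) (u v : M) :
    c z (u * v) = c z u * c z v := by
  have hmul_z_right : c u (v * z) = c u v * c u z := by
    have h := hc u v z
    rw [hz] at h
    exact mul_right_cancel (b := c v z) (by rw [← h]; ac_rfl)
  have hmul_z_left : c (u * z) v = c u v * c z v := by
    have h := hc u z v
    rw [mul_comm z v, hmul_z_right] at h
    exact mul_left_cancel (a := c u z) (by rw [h]; ac_rfl)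
  have h := hc z u v
  rw [mul_comm z u, hmul_z_left] at h
  exact mul_right_cancel (b := c u v) (by rw [← h]; ac_rfl)

end IsTwoCocycle

section SteinbergCocycle

variable {F} {G : Type*} [CommGroup G]

structure IsSteinbergCocycle_s4 (c : Fˣ → Fˣ → G) : Prop where
  isTwoCocycle : IsTwoCocycle c
  apply_one_one : c 1 1 = 1
  apply_inv_inv : ∀ u v, c u⁻¹ v⁻¹ = c u v
  apply_one_sub_mul : ∀ u v w : Fˣ, (w : F) = 1 - u → c u (w * v) = c u v

theorem Units.exists_val_eq_one_sub {u : Fˣ} (hu : u ≠ 1) : ∃ w : Fˣ, (w : F) = 1 - u :=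
  ⟨Units.mk0 _ (sub_ne_zero.mpr fun h => hu (Units.val_eq_one.mp h.symm)), rfl⟩

namespace IsSteinbergCocycle_s4

variable {c : Fˣ → Fˣ → G}

theorem apply_neg_mul (hc : IsSteinbergCocycle_s4 c) (a v : Fˣ) : c a (-a * v) = c a v := by
  rcases eq_or_ne a 1 with rfl | ha
  · simp only [hc.isTwoCocycle.apply_one_left hc.apply_one_one]
  obtain ⟨w, hw⟩ := Units.exists_val_eq_one_sub ha
  obtain ⟨b, hb⟩ := Units.exists_val_eq_one_sub (inv_ne_one.mpr ha)
  -- `(1 - a) / (1 - a⁻¹) = -a`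
  have hwb : w * (b * v⁻¹)⁻¹ = -a * v := by
    have ha1 : (a : F) - 1 ≠ 0 := sub_ne_zero.mpr fun h => ha (Units.val_eq_one.mp h)
    have hb0 : (1 : F) - (a : F)⁻¹ ≠ 0 := by
      rw [← Units.val_inv_eq_inv_val, ← hb]; exact b.ne_zero
    ext
    simp only [Units.val_mul, Units.val_inv_eq_inv_val, Units.val_neg, hw, hb] at *
    field_simp
    ring
  calc c a (-a * v) = c a (w * (b * v⁻¹)⁻¹) := by rw [hwb]
    _ = c a⁻¹ (b * v⁻¹) := by
      rw [hc.apply_one_sub_mul _ _ _ hw, ← hc.apply_inv_inv, inv_inv]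
    _ = c a v := by rw [hc.apply_one_sub_mul _ _ _ hb, hc.apply_inv_inv]

theorem apply_neg_self (hc : IsSteinbergCocycle_s4 c) (a : Fˣ) : c a (-a) = 1 := by
  simpa only [mul_one, hc.isTwoCocycle.apply_one_right hc.apply_one_one] using hc.apply_neg_mul a 1

theorem apply_sq_right (hc : IsSteinbergCocycle_s4 c) (x y : Fˣ) :
    c x (y * y) = commPairing c x y := by
  have h := hc.isTwoCocycle x y (-(x * y))
  rw [hc.apply_neg_self, mul_one,
    show y * -(x * y) = -x * (y * y) by rw [mul_neg, neg_mul, mul_left_comm], hc.apply_neg_mul,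
    show -(x * y) = -y * x by rw [neg_mul, mul_comm], hc.apply_neg_mul] at h
  rw [commPairing, h, mul_div_cancel_right]

theorem apply_mul_sq_right (hc : IsSteinbergCocycle_s4 c) (p q y : Fˣ) :
    c (p * q) (y * y) = c p (y * y) * c q (y * y) := by
  simp only [hc.apply_sq_right, hc.isTwoCocycle.commPairing_mul_left]

theorem apply_sq_mul_right (hc : IsSteinbergCocycle_s4 c) (y u v : Fˣ) :
    c (y * y) (u * v) = c (y * y) u * c (y * y) v :=
  hc.isTwoCocycle.apply_mul_right_of_apply_mul_left (fun p q => hc.apply_mul_sq_right p q y) u v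

end IsSteinbergCocycle_s4

end SteinbergCocycle

theorem K2SL.isSteinbergCocycle_sym : IsSteinbergCocycle_s4 (K2SL.sym F) := by
  have of_mk_eq {x y : FreeGroup (Fˣ × Fˣ)} (h : x * y⁻¹ ∈ K2SLRels F) :
      Abelianization.of (PresentedGroup.mk _ x) = Abelianization.of (PresentedGroup.mk _ y) :=
    congrArg _ (PresentedGroup.mk_eq_mk_of_mul_inv_mem h)
  refine ⟨fun t u v => ?_, ?_, fun u v => ?_, fun u v w hw => ?_⟩
  · have h := of_mk_eq (Or.inl ⟨t, u, v, rfl⟩)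
    simp only [map_mul] at h
    exact h
  · exact congrArg Abelianization.of (PresentedGroup.one_of_mem (Or.inr (Or.inl rfl)))
  · exact (of_mk_eq (Or.inr (Or.inr (Or.inl ⟨u, v, rfl⟩)))).symm
  · exact (of_mk_eq (Or.inr (Or.inr (Or.inr ⟨u, v, w, hw, rfl⟩)))).symm

/-- In `K₂(2,F)`, `{tu, v^{2k}} = {t, v^{2k}}{u, v^{2k}}` and
`{t^{2k}, uv} = {t^{2k}, u}{t^{2k}, v}` for every integer `k`. -/
theorem K2SL.sym_even_bimul (F : Type) [Field F] (t u v : Fˣ) (k : ℤ) :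
    K2SL.sym F (t * u) (v ^ (2 * k)) =
      K2SL.sym F t (v ^ (2 * k)) * K2SL.sym F u (v ^ (2 * k)) ∧
    K2SL.sym F (t ^ (2 * k)) (u * v) =
      K2SL.sym F (t ^ (2 * k)) u * K2SL.sym F (t ^ (2 * k)) v := by
  simp only [two_mul, zpow_add]
  exact ⟨(K2SL.isSteinbergCocycle_sym F).apply_mul_sq_right t u (v ^ k),
    (K2SL.isSteinbergCocycle_sym F).apply_sq_mul_right (t ^ k) u v⟩
end

section
/- Let A=(a_{ij}) be an n×n simply-laced indecomposable generalized Cartan matrix with n≥2 (that is, every off-diagonal entry of A is 0 or −1, and the graph on {1,…,n} with an edge between i and j whenever a_{ij}≠0 is connected), and let F be a field. Then K_2(A,F) is isomorphic to K_2(F). -/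
/-!
Common definitions: presentations of the abelian groups `K₂(F)`, `K₂(2,F)` and `K₂(A,F)`
(Rehmann–Morita).  "The abelian group generated by symbols subject to relations" is
formalized as the abelianization of the corresponding presented group.
-/

variable (F : Type) [Field F]

/-!
For simply-laced `A` with `n ≥ 2`, every `c_i` is a Steinberg symbol: vertex `i` has a
neighbour `j`, and (L6), (L7) with `a_{ji} = -1` make `c_i` bimultiplicative, (L4) then gives
`c_i(u, 1 - u) = 1`. Relation (L5) for an edge, `c_i(u, v⁻¹) = c_j(u⁻¹, v)`, becomes
`c_i = c_j` by (L3), so by connectedness all `c_i` agree. Conversely the Steinberg symbol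
satisfies (L1)–(L7) as soon as `A` is symmetric, so `c_i(u,v) ↦ {u,v}` and `{u,v} ↦ c_i(u,v)`
are mutually inverse.
-/

theorem Abelianization.of_presentedGroup_mk_eq_one {α : Type*} {rels : Set (FreeGroup α)}
    {r : FreeGroup α} (h : r ∈ rels) : Abelianization.of (PresentedGroup.mk rels r) = 1 := by
  rw [PresentedGroup.one_of_mem h, map_one]

namespace K2

variable {F}

theorem sym_mul_left (t u v : Fˣ) : sym F (t * u) v = sym F t v * sym F u v := by
  have h := Abelianization.of_presentedGroup_mk_eq_one (rels := K2Rels F)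
    (Or.inl ⟨t, u, v, rfl⟩)
  simp only [map_mul, map_inv, mul_inv_eq_one] at h
  exact h

theorem sym_mul_right (t u v : Fˣ) : sym F t (u * v) = sym F t u * sym F t v := by
  have h := Abelianization.of_presentedGroup_mk_eq_one (rels := K2Rels F)
    (Or.inr (Or.inl ⟨t, u, v, rfl⟩))
  simp only [map_mul, map_inv, mul_inv_eq_one] at h
  exact h

theorem sym_eq_one_of_eq_one_sub {u w : Fˣ} (hw : (w : F) = 1 - u) : sym F u w = 1 :=
  Abelianization.of_presentedGroup_mk_eq_one (rels := K2Rels F)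
    (Or.inr (Or.inr ⟨u, w, hw, rfl⟩))

theorem sym_zpow_left (u v : Fˣ) (k : ℤ) : sym F (u ^ k) v = sym F u v ^ k :=
  (MonoidHom.mk' (sym F · v) fun t u => sym_mul_left t u v).map_zpow u k

theorem sym_zpow_right (u v : Fˣ) (k : ℤ) : sym F u (v ^ k) = sym F u v ^ k :=
  (MonoidHom.mk' (sym F u) fun t v => sym_mul_right u t v).map_zpow v k

theorem sym_inv_inv (u v : Fˣ) : sym F u⁻¹ v⁻¹ = sym F u v := by
  rw [← zpow_neg_one u, sym_zpow_left, ← zpow_neg_one v, sym_zpow_right, zpow_neg_one,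
    zpow_neg_one, inv_inv]

theorem hom_ext {G : Type*} [Group G] {φ ψ : K2 F →* G}
    (h : ∀ u v, φ (sym F u v) = ψ (sym F u v)) : φ = ψ :=
  Abelianization.hom_ext _ _ <| PresentedGroup.ext fun ⟨u, v⟩ => h u v

end K2

namespace K2A

variable {F} {n : ℕ} {A : Matrix (Fin n) (Fin n) ℤ}

theorem c_inv_inv (i : Fin n) (u v : Fˣ) : c F A i u⁻¹ v⁻¹ = c F A i u v := by
  have h := Abelianization.of_presentedGroup_mk_eq_one (rels := K2ARels F A)
    (Or.inr (Or.inr (Or.inl ⟨i, u, v, rfl⟩)))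
  simp only [map_mul, map_inv, mul_inv_eq_one] at h
  exact h.symm

theorem c_mul_of_eq_one_sub (i : Fin n) {u w : Fˣ} (hw : (w : F) = 1 - u) (v : Fˣ) :
    c F A i u (w * v) = c F A i u v := by
  have h := Abelianization.of_presentedGroup_mk_eq_one (rels := K2ARels F A)
    (Or.inr (Or.inr (Or.inr (Or.inl ⟨i, u, v, w, hw, rfl⟩))))
  simp only [map_mul, map_inv, mul_inv_eq_one] at h
  exact h.symm

theorem c_zpow_right_eq_c_zpow_left {i j : Fin n} (hij : i ≠ j) (u v : Fˣ) :
    c F A i u (v ^ A j i) = c F A j (u ^ A i j) v := by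
  have h := Abelianization.of_presentedGroup_mk_eq_one (rels := K2ARels F A)
    (Or.inr (Or.inr (Or.inr (Or.inr (Or.inl ⟨i, j, u, v, hij, rfl⟩)))))
  simp only [map_mul, map_inv, mul_inv_eq_one] at h
  exact h

theorem c_mul_left_zpow {i j : Fin n} (hij : i ≠ j) (t u v : Fˣ) :
    c F A i (t * u) (v ^ A j i) = c F A i t (v ^ A j i) * c F A i u (v ^ A j i) := by
  have h := Abelianization.of_presentedGroup_mk_eq_one (rels := K2ARels F A)
    (Or.inr (Or.inr (Or.inr (Or.inr (Or.inr (Or.inl ⟨i, j, t, u, v, hij, rfl⟩))))))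
  simp only [map_mul, map_inv, mul_inv_eq_one] at h
  exact h

theorem c_zpow_mul_right {i j : Fin n} (hij : i ≠ j) (t u v : Fˣ) :
    c F A i (t ^ A j i) (u * v) = c F A i (t ^ A j i) u * c F A i (t ^ A j i) v := by
  have h := Abelianization.of_presentedGroup_mk_eq_one (rels := K2ARels F A)
    (Or.inr (Or.inr (Or.inr (Or.inr (Or.inr (Or.inr ⟨i, j, t, u, v, hij, rfl⟩))))))
  simp only [map_mul, map_inv, mul_inv_eq_one] at h
  exact h

theorem c_mul_left {i j : Fin n} (hij : i ≠ j) (hji : A j i = -1) (t u v : Fˣ) :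
    c F A i (t * u) v = c F A i t v * c F A i u v := by
  simpa only [hji, zpow_neg_one, inv_inv] using c_mul_left_zpow (A := A) hij t u v⁻¹

theorem c_mul_right {i j : Fin n} (hij : i ≠ j) (hji : A j i = -1) (t u v : Fˣ) :
    c F A i t (u * v) = c F A i t u * c F A i t v := by
  simpa only [hji, zpow_neg_one, inv_inv] using c_zpow_mul_right (A := A) hij t⁻¹ u v

theorem c_eq_one_of_eq_one_sub {i j : Fin n} (hij : i ≠ j) (hji : A j i = -1) {u w : Fˣ}
    (hw : (w : F) = 1 - u) : c F A i u w = 1 := by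
  have h_one : c F A i u 1 = 1 := by simpa using c_mul_right hij hji u 1 1
  simpa only [mul_one, h_one] using c_mul_of_eq_one_sub (A := A) i hw 1

theorem c_eq_c_of_adj {i j : Fin n} (hij : i ≠ j) (hij' : A i j = -1) (hji : A j i = -1)
    (u v : Fˣ) : c F A i u v = c F A j u v := by
  have h := c_zpow_right_eq_c_zpow_left (A := A) hij u v⁻¹
  rwa [hji, hij', zpow_neg_one, inv_inv, zpow_neg_one, c_inv_inv] at h

theorem c_eq_c_of_reachable {G : SimpleGraph (Fin n)}
    (hadj : ∀ i j, G.Adj i j → A i j = -1 ∧ A j i = -1) {i k : Fin n} (h : G.Reachable i k)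
    (u v : Fˣ) : c F A i u v = c F A k u v := by
  rw [SimpleGraph.reachable_iff_reflTransGen] at h
  induction h with
  | refl => rfl
  | tail _ hjk ih => exact ih.trans (c_eq_c_of_adj hjk.ne (hadj _ _ hjk).1 (hadj _ _ hjk).2 u v)

theorem hom_ext {G : Type*} [Group G] {φ ψ : K2A F A →* G}
    (h : ∀ i u v, φ (c F A i u v) = ψ (c F A i u v)) : φ = ψ :=
  Abelianization.hom_ext _ _ <| PresentedGroup.ext fun ⟨i, u, v⟩ => h i u v

theorem lift_sym_eq_one_of_mem (hsymm : ∀ i j, i ≠ j → A i j = A j i) {r}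
    (hr : r ∈ K2ARels F A) :
    FreeGroup.lift (fun x : Fin n × Fˣ × Fˣ => K2.sym F x.2.1 x.2.2) r = 1 := by
  rcases hr with ⟨i, t, u, v, rfl⟩ | ⟨i, rfl⟩ | ⟨i, u, v, rfl⟩ | ⟨i, u, v, w, hw, rfl⟩ |
      ⟨i, j, u, v, hij, rfl⟩ | ⟨i, j, t, u, v, -, rfl⟩ | ⟨i, j, t, u, v, -, rfl⟩ <;>
    simp only [map_mul, map_inv, FreeGroup.lift_apply_of, mul_inv_eq_one]
  · rw [K2.sym_mul_left, K2.sym_mul_right, mul_assoc]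
  · simpa using K2.sym_zpow_left (1 : Fˣ) 1 0
  · exact (K2.sym_inv_inv u v).symm
  · rw [K2.sym_mul_right, K2.sym_eq_one_of_eq_one_sub hw, one_mul]
  · rw [K2.sym_zpow_right, K2.sym_zpow_left, hsymm i j hij]
  · exact K2.sym_mul_left ..
  · exact K2.sym_mul_right ..

noncomputable def toK2 (hsymm : ∀ i j, i ≠ j → A i j = A j i) : K2A F A →* K2 F :=
  Abelianization.lift (PresentedGroup.toGroup fun _ => lift_sym_eq_one_of_mem hsymm)

theorem toK2_c (hsymm : ∀ i j, i ≠ j → A i j = A j i) (i : Fin n) (u v : Fˣ) :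
    toK2 hsymm (c F A i u v) = K2.sym F u v :=
  (Abelianization.lift_apply_of _ _).trans (PresentedGroup.toGroup.of _)

theorem lift_c_eq_one_of_mem {i j : Fin n} (hij : i ≠ j) (hji : A j i = -1) {r}
    (hr : r ∈ K2Rels F) : FreeGroup.lift (fun x : Fˣ × Fˣ => c F A i x.1 x.2) r = 1 := by
  rcases hr with ⟨t, u, v, rfl⟩ | ⟨t, u, v, rfl⟩ | ⟨u, w, hw, rfl⟩ <;>
    simp only [map_mul, map_inv, FreeGroup.lift_apply_of, mul_inv_eq_one]
  · exact c_mul_left hij hji t u v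
  · exact c_mul_right hij hji t u v
  · exact c_eq_one_of_eq_one_sub hij hji hw

noncomputable def ofK2 {i j : Fin n} (hij : i ≠ j) (hji : A j i = -1) : K2 F →* K2A F A :=
  Abelianization.lift (PresentedGroup.toGroup fun _ => lift_c_eq_one_of_mem hij hji)

theorem ofK2_sym {i j : Fin n} (hij : i ≠ j) (hji : A j i = -1) (u v : Fˣ) :
    ofK2 hij hji (K2.sym F u v) = c F A i u v :=
  (Abelianization.lift_apply_of _ _).trans (PresentedGroup.toGroup.of _)

noncomputable def mulEquivK2 (hsymm : ∀ i j, i ≠ j → A i j = A j i) {i j : Fin n} (hij : i ≠ j)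
    (hji : A j i = -1) (hc : ∀ k u v, c F A k u v = c F A i u v) : K2A F A ≃* K2 F :=
  (toK2 hsymm).toMulEquiv (ofK2 hij hji)
    (hom_ext fun k u v => by simp only [MonoidHom.comp_apply, toK2_c, ofK2_sym, hc,
      MonoidHom.id_apply])
    (K2.hom_ext fun u v => by simp only [MonoidHom.comp_apply, ofK2_sym, toK2_c,
      MonoidHom.id_apply])

end K2A

namespace IsGCM

variable {n : ℕ} {A : Matrix (Fin n) (Fin n) ℤ}

theorem eq_neg_one_of_ne_zero (hA : IsGCM A) (hsl : ∀ i j, i ≠ j → A i j = 0 ∨ A i j = -1)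
    {i j : Fin n} (hij : i ≠ j) (h : A i j ≠ 0) : A j i = -1 :=
  (hsl j i hij.symm).resolve_left fun h0 => h ((hA.2.2 j i).1 h0)

theorem symm_of_simplyLaced (hA : IsGCM A) (hsl : ∀ i j, i ≠ j → A i j = 0 ∨ A i j = -1)
    (i j : Fin n) (hij : i ≠ j) : A i j = A j i := by
  rcases hsl i j hij with h | h
  · rw [h, (hA.2.2 i j).1 h]
  · rw [h, hA.eq_neg_one_of_ne_zero hsl hij (by omega)]

theorem eq_neg_one_of_fromRel_adj (hA : IsGCM A)
    (hsl : ∀ i j, i ≠ j → A i j = 0 ∨ A i j = -1) {i j : Fin n}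
    (h : (SimpleGraph.fromRel fun i j => A i j ≠ 0).Adj i j) : A i j = -1 ∧ A j i = -1 := by
  obtain ⟨hij, hne | hne⟩ := SimpleGraph.fromRel_adj _ _ _ |>.1 h
  · have hji := hA.eq_neg_one_of_ne_zero hsl hij hne
    exact ⟨hA.eq_neg_one_of_ne_zero hsl hij.symm (by omega), hji⟩
  · have hij' := hA.eq_neg_one_of_ne_zero hsl hij.symm hne
    exact ⟨hij', hA.eq_neg_one_of_ne_zero hsl hij (by omega)⟩

end IsGCM

/-- If `A` is an `n×n` simply-laced indecomposable GCM (`n ≥ 2`), i.e. every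
off-diagonal entry is `0` or `-1` and the graph with an edge `i ~ j` whenever
`a_{ij} ≠ 0` is connected, then `K₂(A,F) ≅ K₂(F)`. -/
theorem K2A_simply_laced (n : ℕ) (hn : 2 ≤ n) (A : Matrix (Fin n) (Fin n) ℤ)
    (hA : IsGCM A) (hsl : ∀ i j, i ≠ j → A i j = 0 ∨ A i j = -1)
    (hconn : (SimpleGraph.fromRel fun i j => A i j ≠ 0).Connected)
    (F : Type) [Field F] :
    Nonempty (K2A F A ≃* K2 F) := by
  have hadj : ∀ i j, _ → A i j = -1 ∧ A j i = -1 := fun _ _ => hA.eq_neg_one_of_fromRel_adj hsl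
  have : Nontrivial (Fin n) := Fin.nontrivial_iff_two_le.2 hn
  obtain ⟨i⟩ := hconn.nonempty
  obtain ⟨j, hij⟩ := hconn.preconnected.exists_adj_of_nontrivial i
  exact ⟨K2A.mulEquivK2 (hA.symm_of_simplyLaced hsl) hij.ne (hadj i j hij).2
    fun k => K2A.c_eq_c_of_reachable hadj (hconn.preconnected k i)⟩
end

section
/- Let A=(a_{ij}) be an n×n indecomposable generalized Cartan matrix such that every column of A contains an odd entry, and let F be a field. Let G be the abelian group with presentation G=⟨x_1,…,x_n | x_i^{a_{ji}}=x_j^{a_{ij}}, [x_i,x_j]=1 for 1≤i<j≤n⟩. Suppose G is isomorphic to Z/r_1Z × … × Z/r_sZ × Z^{n−s} for some positive integers r_1,…,r_s and some s∈{0,1,…,n}. Then K_2(A,F) is isomorphic to (K_2(F)/r_1K_2(F)) × … × (K_2(F)/r_sK_2(F)) × K_2(F)^{n−s}. -/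
/-!
Common definitions: presentations of the abelian groups `K₂(F)`, `K₂(2,F)` and `K₂(A,F)`
(Rehmann–Morita).  "The abelian group generated by symbols subject to relations" is
formalized as the abelianization of the corresponding presented group.
-/

variable (F : Type) [Field F]

set_option linter.unusedSectionVars false



namespace K2Aux

private lemma eqsub {C : Type} [AddCommGroup C] {A B X Y : C} (h : A = B)
    (hh : X - Y = A - B) : X = Y := by
  rw [h, sub_self, sub_eq_zero] at hh; exact hh

private lemma addof {C : Type} [AddCommGroup C] {X Y Z : C} (h : X - Y - Z = 0) :
    X = Y + Z := by
  have h2 : X - (Y + Z) = 0 := by rw [← h]; abel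
  exact sub_eq_zero.1 h2

variable {F : Type} [Field F] {C : Type} [AddCommGroup C]

/-- The hypotheses on a Steinberg cocycle additive w.r.t. `a`-th powers. -/
structure Coc (c : Fˣ → Fˣ → C) (a : ℤ) : Prop where
  h1 : ∀ t u v : Fˣ, c t u + c (t*u) v = c t (u*v) + c u v
  h2 : c 1 1 = 0
  h3 : ∀ u v : Fˣ, c u v = c u⁻¹ v⁻¹
  h4 : ∀ u v w : Fˣ, (w : F) = 1 - (u : F) → c u v = c u (w * v)
  ha : Odd a
  h6 : ∀ t u v : Fˣ, c (t*u) (v^a) = c t (v^a) + c u (v^a)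
  h7 : ∀ t u v : Fˣ, c (t^a) (u*v) = c (t^a) u + c (t^a) v

/-- Defect of additivity in the second slot. -/
def Dd (c : Fˣ → Fˣ → C) (t u v : Fˣ) : C := c t (u*v) - c t u - c t v

namespace Coc

variable {c : Fˣ → Fˣ → C} {a : ℤ} (hc : Coc c a)
include hc

lemma ct1_c1v (t v : Fˣ) : c t 1 = c 1 v := by
  have h := hc.h1 t 1 v
  rw [mul_one, one_mul] at h
  exact eqsub h (by abel)

lemma c1v (v : Fˣ) : c 1 v = 0 := by
  rw [← hc.ct1_c1v 1 v]; exact hc.h2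

lemma ct1 (t : Fˣ) : c t 1 = 0 := (hc.ct1_c1v t 1).trans (hc.c1v 1)

lemma key (t u v : Fˣ) : Dd c t u v = c (t*u) v - c t v - c u v := by
  unfold Dd
  exact eqsub (hc.h1 t u v).symm (by abel)

lemma sym23 (t u v : Fˣ) : Dd c t u v = Dd c t v u := by
  unfold Dd; rw [mul_comm u v]; abel

lemma sym12 (t u v : Fˣ) : Dd c t u v = Dd c u t v := by
  rw [hc.key, hc.key, mul_comm t u]; abel

lemma sym13 (t u v : Fˣ) : Dd c t u v = Dd c v u t := by
  rw [hc.sym23, hc.sym12, hc.sym23]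

lemma D3a (t u w : Fˣ) : Dd c t u (w^a) = 0 := by
  rw [hc.key, hc.h6]; abel

lemma D_1 (t u : Fˣ) : Dd c t u 1 = 0 := by
  unfold Dd; rw [mul_one, hc.ct1]; abel

lemma negone : ((-1 : Fˣ))^a = -1 := by
  ext
  push_cast
  exact hc.ha.neg_one_zpow

lemma cneg (u v : Fˣ) : c u (-u * v) = c u v := by
  by_cases hu : u = 1
  · subst hu
    rw [hc.c1v, hc.c1v]
  · have hu' : (u : F) ≠ 1 := fun h => hu (Units.ext h)
    have h1u : (1 : F) - (u : F) ≠ 0 := sub_ne_zero.2 (Ne.symm hu')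
    have hui : ((u⁻¹ : Fˣ) : F) ≠ 1 := fun h => hu (inv_eq_one.1 (Units.ext h))
    have h1ui : (1 : F) - ((u⁻¹ : Fˣ) : F) ≠ 0 := sub_ne_zero.2 (Ne.symm hui)
    set w : Fˣ := Units.mk0 _ h1u with hw
    set w' : Fˣ := Units.mk0 _ h1ui with hw'
    have hA : ∀ z : Fˣ, c u (w * z) = c u z := fun z => (hc.h4 u z w rfl).symm
    have hB0 : ∀ z : Fˣ, c u⁻¹ z = c u⁻¹ (w' * z) := fun z => hc.h4 u⁻¹ z w' rfl
    have hB : ∀ z : Fˣ, c u (w'⁻¹ * z) = c u z := by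
      intro z
      have e : (w'⁻¹ * z)⁻¹ = w' * z⁻¹ := by rw [mul_inv, inv_inv]
      rw [hc.h3 u (w'⁻¹ * z), e, ← hB0 z⁻¹, ← hc.h3 u z]
    have hmw : -u = w * w'⁻¹ := by
      ext
      rw [Units.val_mul, Units.val_inv_eq_inv_val]
      rw [hw, hw']
      simp only [Units.val_mk0, Units.val_neg]
      rw [eq_comm, mul_inv_eq_iff_eq_mul₀ h1ui, Units.val_inv_eq_inv_val]
      have hu0 : (u : F) ≠ 0 := Units.ne_zero u
      field_simp
      ring
    rw [hmw, mul_assoc, hA, hB]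

lemma cut' (u v : Fˣ) : c u (u * v) = c u (-1) + c u v := by
  have e : -u * (-1 * v) = u * v := by rw [← mul_assoc, neg_mul_neg, mul_one]
  have h := hc.cneg u (-1 * v)
  rw [e] at h
  have h2 : Dd c u v (-1) = 0 := by
    have := hc.D3a u v (-1)
    rwa [hc.negone] at this
  unfold Dd at h2
  have h3 : c u (v * -1) = c u v + c u (-1) := addof h2
  rw [mul_comm v (-1)] at h3
  rw [h, h3]; abel

lemma cuu (u : Fˣ) : c u u = c u (-1) := by
  have h := hc.cut' u 1
  rwa [mul_one, hc.ct1, add_zero] at h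

lemma Dself (t z : Fˣ) : Dd c t z t = 0 := by
  unfold Dd
  rw [mul_comm z t, hc.cut', hc.cuu]; abel

lemma czt (t z : Fˣ) : c t (z * t) = c t z + c t t := by
  have h := hc.Dself t z
  unfold Dd at h
  exact addof h

lemma Dmul31 (t u v : Fˣ) : Dd c t u (v * t) = Dd c t u v := by
  unfold Dd
  rw [← mul_assoc, hc.czt, hc.czt]; abel

lemma Dinv_pre (u v : Fˣ) : Dd c u v u⁻¹ = 0 := by
  have h := hc.Dmul31 u v u⁻¹
  rw [inv_mul_cancel, hc.D_1] at h
  exact h.symm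

lemma cinv1 (u v : Fˣ) : c u⁻¹ v = - c u v := by
  have h0 : Dd c u u⁻¹ v = 0 := by rw [hc.sym23]; exact hc.Dinv_pre u v
  rw [hc.key, mul_inv_cancel, hc.c1v] at h0
  exact eqsub h0.symm (by abel)

lemma cinv2 (u v : Fˣ) : c u v⁻¹ = - c u v := by
  rw [hc.h3 u v⁻¹, inv_inv, hc.cinv1]

lemma Dinv1 (t u v : Fˣ) : Dd c t⁻¹ u v = - Dd c t u v := by
  unfold Dd
  rw [hc.cinv1 t (u*v), hc.cinv1 t u, hc.cinv1 t v]; abel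

lemma Dinv2 (t u v : Fˣ) : Dd c t u⁻¹ v = - Dd c t u v := by
  rw [hc.sym12, hc.Dinv1, hc.sym12]

lemma Dinv3 (t u v : Fˣ) : Dd c t u v⁻¹ = - Dd c t u v := by
  rw [hc.sym13, hc.Dinv1, hc.sym13]

lemma Dinvall (t u v : Fˣ) : Dd c t⁻¹ u⁻¹ v⁻¹ = Dd c t u v := by
  unfold Dd
  rw [← mul_inv, ← hc.h3, ← hc.h3, ← hc.h3]

lemma Dneg (t u v : Fˣ) : Dd c t u v = - Dd c t u v := by
  have h := hc.Dinvall t u v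
  rw [hc.Dinv1, hc.Dinv2, hc.Dinv3] at h
  conv_lhs => rw [← h]
  abel

lemma DD0 (t u v : Fˣ) : Dd c t u v + Dd c t u v = 0 :=
  add_eq_zero_iff_eq_neg.2 (hc.Dneg t u v)

lemma csq (z v : Fˣ) : c (z*z) v = c z v + c z v := by
  have h := hc.h1 z z v
  rw [hc.cut' z v, hc.cuu z] at h
  exact eqsub h (by abel)

lemma Dsq (t u z : Fˣ) : Dd c t u (z*z) = 0 := by
  rw [hc.sym13]
  have h := hc.DD0 z u t
  unfold Dd at h ⊢
  rw [hc.csq, hc.csq, hc.csq]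
  exact eqsub h (by abel)

lemma Dmula (t u v w : Fˣ) : Dd c t u (v * w^a) = Dd c t u v := by
  have e1 : c t ((u*v) * w^a) = c t (u*v) + c t (w^a) := by
    have h := hc.D3a t (u*v) w; unfold Dd at h; exact addof h
  have e2 : c t (v * w^a) = c t v + c t (w^a) := by
    have h := hc.D3a t v w; unfold Dd at h; exact addof h
  unfold Dd
  rw [← mul_assoc, e1, e2]; abel

lemma Dzero (t u v : Fˣ) : Dd c t u v = 0 := by
  obtain ⟨m, hm⟩ := hc.ha
  have hv : v * (v⁻¹)^a = v^(-m) * v^(-m) := by rw [hm]; group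
  calc Dd c t u v = Dd c t u (v * (v⁻¹)^a) := (hc.Dmula t u v v⁻¹).symm
    _ = Dd c t u (v^(-m) * v^(-m)) := by rw [hv]
    _ = 0 := hc.Dsq t u (v^(-m))

theorem bilin2 (t u v : Fˣ) : c t (u*v) = c t u + c t v := by
  have h := hc.Dzero t u v
  unfold Dd at h
  exact addof h

theorem bilin1 (t u v : Fˣ) : c (t*u) v = c t v + c u v := by
  have h := hc.Dzero t u v
  rw [hc.key] at h
  exact addof h

end Coc
end K2Aux
namespace K2Aux

lemma rel_one {α : Type} {rels : Set (FreeGroup α)} {r : FreeGroup α} (h : r ∈ rels) :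
    PresentedGroup.mk rels r = 1 :=
  (QuotientGroup.eq_one_iff r).2 (Subgroup.subset_normalClosure h)

section Lift

variable {α : Type} {rels : Set (FreeGroup α)} {C : Type} [CommGroup C]

/-- The canonical map from the free group to the abelianized presented group. -/
def pgAb (rels : Set (FreeGroup α)) : FreeGroup α →* Abelianization (PresentedGroup rels) :=
  (Abelianization.of).comp (PresentedGroup.mk rels)

lemma pgAb_rel {r : FreeGroup α} (h : r ∈ rels) : pgAb rels r = 1 := by
  unfold pgAb
  rw [MonoidHom.comp_apply, rel_one h, map_one]

/-- Universal property of the abelianized presented group. -/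
def pgLift (f : α → C) (h : ∀ r ∈ rels, FreeGroup.lift f r = 1) :
    Abelianization (PresentedGroup rels) →* C :=
  Abelianization.lift (PresentedGroup.toGroup h)

@[simp] lemma pgLift_of (f : α → C) (h : ∀ r ∈ rels, FreeGroup.lift f r = 1) (x : α) :
    pgLift f h (pgAb rels (FreeGroup.of x)) = f x := by
  unfold pgLift pgAb
  rw [MonoidHom.comp_apply]
  show Abelianization.lift (PresentedGroup.toGroup h) (Abelianization.of (PresentedGroup.of x)) = _
  rw [Abelianization.lift_apply_of, PresentedGroup.toGroup.of]

lemma pgExt {φ ψ : Abelianization (PresentedGroup rels) →* C}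
    (h : ∀ x : α, φ (pgAb rels (FreeGroup.of x)) = ψ (pgAb rels (FreeGroup.of x))) : φ = ψ :=
  Abelianization.hom_ext _ _ (PresentedGroup.ext fun x => h x)

end Lift

end K2Aux
namespace K2Aux
section K2sec
variable (F : Type) [Field F]

lemma sym_def (u v : Fˣ) : K2.sym F u v = pgAb (K2Rels F) (FreeGroup.of (u,v)) := rfl

lemma symA1 (t u v : Fˣ) : K2.sym F (t*u) v = K2.sym F t v * K2.sym F u v := by
  have h := pgAb_rel (rels := K2Rels F) (Or.inl ⟨t,u,v,rfl⟩)
  rw [map_mul, map_inv, map_mul, mul_inv_eq_one] at h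
  exact h

lemma symA2 (t u v : Fˣ) : K2.sym F t (u*v) = K2.sym F t u * K2.sym F t v := by
  have h := pgAb_rel (rels := K2Rels F) (Or.inr (Or.inl ⟨t,u,v,rfl⟩))
  rw [map_mul, map_inv, map_mul, mul_inv_eq_one] at h
  exact h

lemma symA3 {u w : Fˣ} (hw : (w : F) = 1 - (u : F)) : K2.sym F u w = 1 := by
  have h := pgAb_rel (rels := K2Rels F) (Or.inr (Or.inr ⟨u,w,hw,rfl⟩))
  exact h

/-- The symbol as a homomorphism in the first slot. -/
noncomputable def symHom1 (v : Fˣ) : Fˣ →* K2 F :=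
  MonoidHom.mk' (fun u => K2.sym F u v) (fun a b => symA1 F a b v)

/-- The symbol as a homomorphism in the second slot. -/
noncomputable def symHom2 (u : Fˣ) : Fˣ →* K2 F :=
  MonoidHom.mk' (K2.sym F u) (fun a b => symA2 F u a b)

lemma sym_zpow1 (u v : Fˣ) (m : ℤ) : K2.sym F (u^m) v = (K2.sym F u v)^m :=
  map_zpow (symHom1 F v) u m

lemma sym_zpow2 (u v : Fˣ) (m : ℤ) : K2.sym F u (v^m) = (K2.sym F u v)^m :=
  map_zpow (symHom2 F u) v m

lemma sym_inv1 (u v : Fˣ) : K2.sym F u⁻¹ v = (K2.sym F u v)⁻¹ :=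
  map_inv (symHom1 F v) u

lemma sym_inv2 (u v : Fˣ) : K2.sym F u v⁻¹ = (K2.sym F u v)⁻¹ :=
  map_inv (symHom2 F u) v

lemma sym_invinv (u v : Fˣ) : K2.sym F u⁻¹ v⁻¹ = K2.sym F u v := by
  rw [sym_inv1, sym_inv2, inv_inv]

lemma symL1 (t u v : Fˣ) :
    K2.sym F t u * K2.sym F (t*u) v = K2.sym F t (u*v) * K2.sym F u v := by
  rw [symA1, symA2, mul_assoc]

/-- Universal property of `K₂(F)`. -/
def K2lift {C : Type} [CommGroup C] (f : Fˣ → Fˣ → C)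
    (hf1 : ∀ t u v, f (t*u) v = f t v * f u v)
    (hf2 : ∀ t u v, f t (u*v) = f t u * f t v)
    (hf3 : ∀ u w : Fˣ, (w : F) = 1 - (u : F) → f u w = 1) : K2 F →* C :=
  pgLift (fun p => f p.1 p.2) (by
    rintro r (⟨t,u,v,rfl⟩|⟨t,u,v,rfl⟩|⟨u,w,hw,rfl⟩)
    · rw [map_mul, map_inv, map_mul, FreeGroup.lift_apply_of, FreeGroup.lift_apply_of,
        FreeGroup.lift_apply_of, mul_inv_eq_one]
      exact hf1 t u v
    · rw [map_mul, map_inv, map_mul, FreeGroup.lift_apply_of, FreeGroup.lift_apply_of,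
        FreeGroup.lift_apply_of, mul_inv_eq_one]
      exact hf2 t u v
    · rw [FreeGroup.lift_apply_of]
      exact hf3 u w hw)

lemma K2lift_sym {C : Type} [CommGroup C] (f : Fˣ → Fˣ → C) (hf1) (hf2) (hf3) (u v : Fˣ) :
    K2lift F f hf1 hf2 hf3 (K2.sym F u v) = f u v :=
  pgLift_of _ _ _

lemma K2ext {C : Type} [CommGroup C] {φ ψ : K2 F →* C}
    (h : ∀ u v : Fˣ, φ (K2.sym F u v) = ψ (K2.sym F u v)) : φ = ψ :=
  pgExt (fun x => h x.1 x.2)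

end K2sec
end K2Aux
namespace K2Aux

lemma hom_zpow_apply {M G : Type} [MulOneClass M] [CommGroup G] (f : M →* G) (m : ℤ) (x : M) :
    (f^m) x = (f x)^m := by
  have h := map_zpow (MonoidHom.eval x) f m
  simpa using h

section K2Asec
variable (F : Type) [Field F] {n : ℕ} (A : Matrix (Fin n) (Fin n) ℤ)

lemma cL1 (i : Fin n) (t u v : Fˣ) :
    K2A.c F A i t u * K2A.c F A i (t*u) v = K2A.c F A i t (u*v) * K2A.c F A i u v := by
  have h := pgAb_rel (rels := K2ARels F A) (Or.inl ⟨i,t,u,v,rfl⟩)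
  simp only [map_mul, map_inv, mul_inv_eq_one] at h
  exact h

lemma cL2 (i : Fin n) : K2A.c F A i 1 1 = 1 :=
  pgAb_rel (rels := K2ARels F A) (Or.inr (Or.inl ⟨i,rfl⟩))

lemma cL3 (i : Fin n) (u v : Fˣ) : K2A.c F A i u v = K2A.c F A i u⁻¹ v⁻¹ := by
  have h := pgAb_rel (rels := K2ARels F A) (Or.inr (Or.inr (Or.inl ⟨i,u,v,rfl⟩)))
  simp only [map_mul, map_inv, mul_inv_eq_one] at h
  exact h

lemma cL4 (i : Fin n) (u v w : Fˣ) (hw : (w : F) = 1 - (u : F)) :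
    K2A.c F A i u v = K2A.c F A i u (w*v) := by
  have h := pgAb_rel (rels := K2ARels F A) (Or.inr (Or.inr (Or.inr (Or.inl ⟨i,u,v,w,hw,rfl⟩))))
  simp only [map_mul, map_inv, mul_inv_eq_one] at h
  exact h

lemma cL5 (i j : Fin n) (hij : i ≠ j) (u v : Fˣ) :
    K2A.c F A i u (v^(A j i)) = K2A.c F A j (u^(A i j)) v := by
  have h := pgAb_rel (rels := K2ARels F A)
    (Or.inr (Or.inr (Or.inr (Or.inr (Or.inl ⟨i,j,u,v,hij,rfl⟩)))))
  simp only [map_mul, map_inv, mul_inv_eq_one] at h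
  exact h

lemma cL6 (i j : Fin n) (hij : i ≠ j) (t u v : Fˣ) :
    K2A.c F A i (t*u) (v^(A j i)) = K2A.c F A i t (v^(A j i)) * K2A.c F A i u (v^(A j i)) := by
  have h := pgAb_rel (rels := K2ARels F A)
    (Or.inr (Or.inr (Or.inr (Or.inr (Or.inr (Or.inl ⟨i,j,t,u,v,hij,rfl⟩))))))
  simp only [map_mul, map_inv, mul_inv_eq_one] at h
  exact h

lemma cL7 (i j : Fin n) (hij : i ≠ j) (t u v : Fˣ) :
    K2A.c F A i (t^(A j i)) (u*v) = K2A.c F A i (t^(A j i)) u * K2A.c F A i (t^(A j i)) v := by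
  have h := pgAb_rel (rels := K2ARels F A)
    (Or.inr (Or.inr (Or.inr (Or.inr (Or.inr (Or.inr ⟨i,j,t,u,v,hij,rfl⟩))))))
  simp only [map_mul, map_inv, mul_inv_eq_one] at h
  exact h

lemma K2Aext {C : Type} [CommGroup C] {φ ψ : K2A F A →* C}
    (h : ∀ (i : Fin n) (u v : Fˣ), φ (K2A.c F A i u v) = ψ (K2A.c F A i u v)) : φ = ψ :=
  pgExt (fun x => h x.1 x.2.1 x.2.2)

variable (hA : IsGCM A) (hodd : ∀ i, ∃ k, Odd (A k i))

include hA hodd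

lemma ccoc (i : Fin n) : ∃ a : ℤ, Coc (fun u v => Additive.ofMul (K2A.c F A i u v)) a := by
  obtain ⟨k, hk⟩ := hodd i
  have hik : i ≠ k := by
    rintro rfl
    rw [hA.1 i, Int.odd_iff] at hk
    norm_num at hk
  exact ⟨A k i,
    { h1 := fun t u v => congrArg Additive.ofMul (cL1 F A i t u v)
      h2 := congrArg Additive.ofMul (cL2 F A i)
      h3 := fun u v => congrArg Additive.ofMul (cL3 F A i u v)
      h4 := fun u v w hw => congrArg Additive.ofMul (cL4 F A i u v w hw)
      ha := hk
      h6 := fun t u v => congrArg Additive.ofMul (cL6 F A i k hik t u v)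
      h7 := fun t u v => congrArg Additive.ofMul (cL7 F A i k hik t u v) }⟩

lemma cbilin1 (i : Fin n) (t u v : Fˣ) :
    K2A.c F A i (t*u) v = K2A.c F A i t v * K2A.c F A i u v := by
  obtain ⟨a, hc⟩ := ccoc F A hA hodd i
  exact congrArg Additive.toMul (hc.bilin1 t u v)

lemma cbilin2 (i : Fin n) (t u v : Fˣ) :
    K2A.c F A i t (u*v) = K2A.c F A i t u * K2A.c F A i t v := by
  obtain ⟨a, hc⟩ := ccoc F A hA hodd i
  exact congrArg Additive.toMul (hc.bilin2 t u v)

lemma c_one2 (i : Fin n) (u : Fˣ) : K2A.c F A i u 1 = 1 := by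
  have h := cbilin2 F A hA hodd i u 1 1
  rw [mul_one] at h
  exact left_eq_mul.1 h

lemma cA3 (i : Fin n) (u w : Fˣ) (hw : (w : F) = 1 - (u : F)) : K2A.c F A i u w = 1 := by
  have h := cL4 F A i u 1 w hw
  rw [mul_one, c_one2 F A hA hodd] at h
  exact h.symm

/-- The Steinberg symbol homomorphism `K₂(F) →* K₂(A,F)` attached to the index `i`. -/
noncomputable def cHom (i : Fin n) : K2 F →* K2A F A :=
  K2lift F (fun u v => K2A.c F A i u v) (cbilin1 F A hA hodd i) (cbilin2 F A hA hodd i)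
    (cA3 F A hA hodd i)

lemma cHom_sym (i : Fin n) (u v : Fˣ) :
    cHom F A hA hodd i (K2.sym F u v) = K2A.c F A i u v :=
  K2lift_sym F _ _ _ _ u v

lemma cpow (i j : Fin n) (hij : i ≠ j) (x : K2 F) :
    (cHom F A hA hodd i x) ^ (A j i) = (cHom F A hA hodd j x) ^ (A i j) := by
  have hext : (zpowGroupHom (A j i)).comp (cHom F A hA hodd i)
      = (zpowGroupHom (A i j)).comp (cHom F A hA hodd j) := by
    apply K2ext
    intro u v
    simp only [MonoidHom.comp_apply, zpowGroupHom_apply, cHom_sym]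
    rw [← cHom_sym F A hA hodd i u v, ← map_zpow, ← sym_zpow2, cHom_sym,
      cL5 F A i j hij, ← cHom_sym F A hA hodd j, sym_zpow1, map_zpow, cHom_sym]
  have := congrArg (fun φ => φ x) hext
  simpa using this

lemma cHom_pow_eq (i j : Fin n) (hij : i ≠ j) :
    (cHom F A hA hodd i) ^ (A j i) = (cHom F A hA hodd j) ^ (A i j) := by
  ext x
  rw [hom_zpow_apply, hom_zpow_apply]
  exact cpow F A hA hodd i j hij x

end K2Asec

section Gsec
variable {n : ℕ} (A : Matrix (Fin n) (Fin n) ℤ)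

/-- Generator of `GGroup A`. -/
def gg (i : Fin n) : GGroup A := pgAb (GRels A) (FreeGroup.of i)

lemma ggRel (i j : Fin n) (hij : i ≠ j) : gg A i ^ (A j i) = gg A j ^ (A i j) := by
  rcases hij.lt_or_gt with hlt | hlt
  · have h := pgAb_rel (rels := GRels A) ⟨i,j,hlt,rfl⟩
    simp only [map_mul, map_inv, map_zpow, mul_inv_eq_one] at h
    exact h
  · have h := pgAb_rel (rels := GRels A) ⟨j,i,hlt,rfl⟩
    simp only [map_mul, map_inv, map_zpow, mul_inv_eq_one] at h
    exact h.symm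

/-- Universal property of `GGroup A`. -/
def Glift {C : Type} [CommGroup C] (f : Fin n → C)
    (hf : ∀ i j, i ≠ j → f i ^ (A j i) = f j ^ (A i j)) : GGroup A →* C :=
  pgLift f (by
    rintro r ⟨i,j,hij,rfl⟩
    simp only [map_mul, map_inv, map_zpow, FreeGroup.lift_apply_of, mul_inv_eq_one]
    exact hf i j (ne_of_lt hij))

lemma Glift_gen {C : Type} [CommGroup C] (f : Fin n → C) (hf) (i : Fin n) :
    Glift A f hf (gg A i) = f i :=
  pgLift_of _ _ _

lemma Gext {C : Type} [CommGroup C] {φ ψ : GGroup A →* C}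
    (h : ∀ i, φ (gg A i) = ψ (gg A i)) : φ = ψ :=
  pgExt h

end Gsec
end K2Aux
namespace K2Aux

section ZExp
variable {H : Type} [CommGroup H] {N : ℕ} [NeZero N]

/-- Exponentiation by an element of `ZMod N`, for elements killed by `N`. -/
def zexp (y : H) (a : ZMod N) : H := y ^ a.val

lemma pow_mod_eq (y : H) (hy : y ^ N = 1) (m : ℕ) : y ^ (m % N) = y ^ m := by
  conv_rhs => rw [← Nat.div_add_mod m N]
  rw [pow_add, pow_mul, hy, one_pow, one_mul]

lemma zexp_natCast (y : H) (hy : y ^ N = 1) (m : ℕ) : zexp y ((m : ℕ) : ZMod N) = y ^ m := by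
  rw [zexp, ZMod.val_natCast, pow_mod_eq y hy]

lemma zexp_intCast (y : H) (hy : y ^ N = 1) (m : ℤ) : zexp y ((m : ℤ) : ZMod N) = y ^ m := by
  have hy' : y ^ (N : ℤ) = 1 := by rw [zpow_natCast, hy]
  rw [zexp, ← zpow_natCast y (((m : ℤ) : ZMod N)).val, ZMod.val_intCast]
  conv_rhs => rw [← Int.mul_ediv_add_emod m (N : ℤ)]
  rw [zpow_add, zpow_mul, hy', one_zpow, one_mul]

lemma zexp_add (y : H) (hy : y ^ N = 1) (a b : ZMod N) :
    zexp y (a + b) = zexp y a * zexp y b := by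
  rw [zexp, ZMod.val_add, pow_mod_eq y hy, pow_add]; rfl

lemma zexp_mul_base (y z : H) (a : ZMod N) : zexp (y * z) a = zexp y a * zexp z a :=
  mul_pow y z a.val

lemma zexp_one_base (a : ZMod N) : zexp (1 : H) a = 1 := one_pow _

lemma zexp_zero (y : H) : zexp y (0 : ZMod N) = 1 := by
  rw [zexp, ZMod.val_zero, pow_zero]

lemma zexp_one_exp (y : H) (hy : y ^ N = 1) : zexp y (1 : ZMod N) = y := by
  rw [← Nat.cast_one, zexp_natCast y hy, pow_one]

lemma zexp_zpow_base (y : H) (m : ℤ) (a : ZMod N) : zexp (y ^ m) a = (zexp y a) ^ m := by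
  rw [zexp, zexp, ← zpow_natCast (y ^ m), ← zpow_mul, mul_comm, zpow_mul, zpow_natCast]

lemma zexp_zsmul (y : H) (hy : y ^ N = 1) (m : ℤ) (a : ZMod N) :
    zexp y (m • a) = (zexp y a) ^ m := by
  have h1 : m • a = ((m * (a.val : ℤ) : ℤ) : ZMod N) := by
    rw [zsmul_eq_mul, Int.cast_mul]
    congr 1
    rw [Int.cast_natCast]
    exact (ZMod.natCast_rightInverse a).symm ▸ rfl
  rw [h1, zexp_intCast y hy, mul_comm, zpow_mul, zexp, zpow_natCast]

end ZExp
end K2Aux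
namespace K2Aux

section TT
variable (F : Type) [Field F] {s m' : ℕ} (r : Fin s → ℕ) [∀ k, NeZero (r k)]

noncomputable def qk (k : Fin s) : K2 F →* K2 F ⧸ K2.powSubgroup F (r k) :=
  QuotientGroup.mk' _

lemma qk_pow (k : Fin s) (y : K2 F ⧸ K2.powSubgroup F (r k)) : y ^ (r k) = 1 := by
  refine QuotientGroup.induction_on y (fun x => ?_)
  show (QuotientGroup.mk' (K2.powSubgroup F (r k))) x ^ (r k) = 1
  rw [← map_pow (QuotientGroup.mk' _) x (r k)]
  exact (QuotientGroup.eq_one_iff _).2 (Subgroup.subset_closure ⟨x, rfl⟩)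

/-- The pairing `K₂(F) × M → T`. -/
noncomputable def tpair (x : K2 F) (g : (∀ k : Fin s, ZMod (r k)) × (Fin m' → ℤ)) :
    (∀ k : Fin s, K2 F ⧸ K2.powSubgroup F (r k)) × (Fin m' → K2 F) :=
  (fun k => zexp (qk F r k x) (g.1 k), fun c => x ^ (g.2 c))

lemma tpair_mul_left (x y : K2 F) (g) :
    tpair F r (x * y) g = (tpair F r x g : _ × (Fin m' → K2 F)) * tpair F r y g := by
  unfold tpair
  refine Prod.ext ?_ ?_
  · funext k
    simp only [map_mul, Prod.fst_mul, Pi.mul_apply]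
    exact zexp_mul_base _ _ _
  · funext c
    simp only [Prod.snd_mul, Pi.mul_apply]
    exact mul_zpow x y _

lemma tpair_one_left (g) : tpair F r (1 : K2 F) g = (1 : _ × (Fin m' → K2 F)) := by
  unfold tpair
  refine Prod.ext ?_ ?_
  · funext k
    simp only [map_one, Prod.fst_one, Pi.one_apply]
    exact zexp_one_base _
  · funext c
    simp only [Prod.snd_one, Pi.one_apply]
    exact one_zpow _

/-- `tpair` as a homomorphism in the left variable. -/
noncomputable def tpairHom (g : (∀ k : Fin s, ZMod (r k)) × (Fin m' → ℤ)) :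
    K2 F →* (∀ k : Fin s, K2 F ⧸ K2.powSubgroup F (r k)) × (Fin m' → K2 F) :=
  MonoidHom.mk' (fun x => tpair F r x g) (fun x y => tpair_mul_left F r x y g)

lemma tpair_zpow_left (x : K2 F) (m : ℤ) (g) :
    tpair F r (x ^ m) g = (tpair F r x g : _ × (Fin m' → K2 F)) ^ m :=
  map_zpow (tpairHom F r g) x m

lemma tpair_add_right (x : K2 F) (g h) :
    tpair F r x (g + h) = (tpair F r x g : _ × (Fin m' → K2 F)) * tpair F r x h := by
  unfold tpair
  refine Prod.ext ?_ ?_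
  · funext k
    simp only [Prod.fst_mul, Pi.mul_apply, Prod.fst_add, Pi.add_apply]
    exact zexp_add _ (qk_pow F r k _) _ _
  · funext c
    simp only [Prod.snd_mul, Pi.mul_apply, Prod.snd_add, Pi.add_apply]
    exact zpow_add x _ _

/-- `tpair` as a homomorphism in the right variable. -/
noncomputable def tpairHomR (x : K2 F) :
    Multiplicative ((∀ k : Fin s, ZMod (r k)) × (Fin m' → ℤ)) →*
      (∀ k : Fin s, K2 F ⧸ K2.powSubgroup F (r k)) × (Fin m' → K2 F) :=
  MonoidHom.mk' (fun g => tpair F r x g.toAdd) (fun g h => tpair_add_right F r x g.toAdd h.toAdd)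

lemma tpair_zsmul_right (x : K2 F) (m : ℤ) (g) :
    tpair F r x (m • g) = (tpair F r x g : _ × (Fin m' → K2 F)) ^ m := by
  have h := map_zpow (tpairHomR F r x) (Multiplicative.ofAdd g) m
  rw [← ofAdd_zsmul] at h
  exact h

/-- Generator of the `k`-th torsion factor. -/
def dk (k : Fin s) : (∀ k : Fin s, ZMod (r k)) × (Fin m' → ℤ) := (Pi.single k 1, 0)

/-- Generator of the `c`-th free factor. -/
def dc (c : Fin m') : (∀ k : Fin s, ZMod (r k)) × (Fin m' → ℤ) := (0, Pi.single c 1)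

lemma dec (g : (∀ k : Fin s, ZMod (r k)) × (Fin m' → ℤ)) :
    g = (∑ k, ((g.1 k).val : ℤ) • dk r k) + ∑ c, (g.2 c) • dc r c := by
  refine Prod.ext ?_ ?_
  · rw [Prod.fst_add, Prod.fst_sum, Prod.fst_sum]
    simp only [dk, dc, Prod.smul_fst, smul_zero]
    rw [Finset.sum_const_zero, add_zero]
    have h1 : ∀ k, ((g.1 k).val : ℤ) • (Pi.single k (1 : ZMod (r k)) : ∀ j, ZMod (r j)) = Pi.single k (g.1 k) := by
      intro k
      have h2 : ((g.1 k).val : ℤ) • (1 : ZMod (r k)) = g.1 k := by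
        rw [zsmul_eq_mul, mul_one, Int.cast_natCast]
        exact ZMod.natCast_rightInverse (g.1 k)
      rw [← Pi.single_smul (f := fun j => ZMod (r j)) k ((g.1 k).val : ℤ) (1 : ZMod (r k)), h2]
    simp only [h1]
    exact (Finset.univ_sum_single g.1).symm
  · rw [Prod.snd_add, Prod.snd_sum, Prod.snd_sum]
    simp only [dk, dc, Prod.smul_snd, smul_zero]
    rw [Finset.sum_const_zero, zero_add]
    have h1 : ∀ c, (g.2 c) • (Pi.single c (1 : ℤ) : Fin m' → ℤ) = Pi.single c (g.2 c) := by
      intro c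
      rw [← Pi.single_smul' c (g.2 c) (1 : ℤ), smul_eq_mul, mul_one]
    simp only [h1]
    exact (Finset.univ_sum_single g.2).symm

lemma rk_smul_dk (k : Fin s) : ((r k : ℤ)) • dk (m' := m') r k = 0 := by
  refine Prod.ext ?_ ?_
  · simp only [dk, Prod.smul_fst, Prod.fst_zero]
    rw [← Pi.single_smul (f := fun j => ZMod (r j)) k ((r k : ℤ)) (1 : ZMod (r k))]
    have h : ((r k : ℤ)) • (1 : ZMod (r k)) = 0 := by
      rw [zsmul_eq_mul, mul_one, Int.cast_natCast, ZMod.natCast_self]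
    rw [h, Pi.single_zero]
  · simp only [dk, Prod.smul_snd, Prod.snd_zero, smul_zero]

lemma tpair_dk (x : K2 F) (k : Fin s) :
    tpair F r x (dk (m' := m') r k) = (Pi.mulSingle k (qk F r k x), 1) := by
  refine Prod.ext ?_ ?_
  · funext k'
    simp only [tpair, dk]
    rcases eq_or_ne k' k with rfl | h
    · rw [Pi.single_eq_same, zexp_one_exp _ (qk_pow F r k' _), Pi.mulSingle_eq_same]
    · rw [Pi.single_eq_of_ne h, zexp_zero, Pi.mulSingle_eq_of_ne h]
  · funext c
    simp only [tpair, dk, Pi.zero_apply, zpow_zero, Pi.one_apply]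

lemma tpair_dc (x : K2 F) (c : Fin m') :
    tpair F r x (dc (s := s) (r := r) c) = (1, Pi.mulSingle c x) := by
  refine Prod.ext ?_ ?_
  · funext k
    simp only [tpair, dc, Pi.zero_apply, zexp_zero, Pi.one_apply]
  · funext c'
    simp only [tpair, dc]
    rcases eq_or_ne c' c with rfl | h
    · rw [Pi.single_eq_same, zpow_one, Pi.mulSingle_eq_same]
    · rw [Pi.single_eq_of_ne h, zpow_zero, Pi.mulSingle_eq_of_ne h]

end TT
end K2Aux

open K2Aux in
/-- If `A` is an `n×n` indecomposable GCM all of whose columns contain an odd entry, and the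
abelian group `G = ⟨x_1,…,x_n ∣ x_i^{a_{ji}} = x_j^{a_{ij}}⟩` is isomorphic to
`ℤ/r_1 × ⋯ × ℤ/r_s × ℤ^{n-s}` with all `r_i > 0`, then
`K₂(A,F) ≅ K₂(F)/r_1K₂(F) × ⋯ × K₂(F)/r_sK₂(F) × K₂(F)^{n-s}`. -/
theorem K2A_odd_columns (n : ℕ) (A : Matrix (Fin n) (Fin n) ℤ) (hA : IsGCM A)
    (hconn : (SimpleGraph.fromRel fun i j => A i j ≠ 0).Connected)
    (hodd : ∀ i, ∃ k, Odd (A k i))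
    (F : Type) [Field F] (s : ℕ) (hs : s ≤ n) (r : Fin s → ℕ) (hr : ∀ i, 0 < r i)
    (hG : Nonempty (GGroup A ≃*
      Multiplicative ((∀ i : Fin s, ZMod (r i)) × (Fin (n - s) → ℤ)))) :
    Nonempty (K2A F A ≃*
      ((∀ i : Fin s, K2 F ⧸ K2.powSubgroup F (r i)) × (Fin (n - s) → K2 F))) := by
  classical
  obtain ⟨e⟩ := hG
  haveI : ∀ k : Fin s, NeZero (r k) := fun k => ⟨(hr k).ne'⟩
  -- image of the `i`-th generator of `G` in additive coordinates
  set g0 : Fin n → (∀ k : Fin s, ZMod (r k)) × (Fin (n - s) → ℤ) :=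
    fun i => Multiplicative.toAdd (e (gg A i)) with hg0def
  have hg0 : ∀ i j, i ≠ j → (A j i) • g0 i = (A i j) • g0 j := by
    intro i j hij
    have h := congrArg e (ggRel A i j hij)
    rw [map_zpow, map_zpow] at h
    have h2 := congrArg Multiplicative.toAdd h
    rw [toAdd_zpow, toAdd_zpow] at h2
    exact h2
  -- the forward homomorphism
  have hrel : ∀ rr ∈ K2ARels F A,
      FreeGroup.lift (fun p : Fin n × Fˣ × Fˣ =>
        tpair F r (K2.sym F p.2.1 p.2.2) (g0 p.1)) rr = 1 := by
    rintro rr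
      (⟨i,t,u,v,rfl⟩|⟨i,rfl⟩|⟨i,u,v,rfl⟩|⟨i,u,v,w,hw,rfl⟩|⟨i,j,u,v,hij,rfl⟩|
        ⟨i,j,t,u,v,hij,rfl⟩|⟨i,j,t,u,v,hij,rfl⟩) <;>
      simp only [map_mul, map_inv, FreeGroup.lift_apply_of, mul_inv_eq_one]
    · rw [← tpair_mul_left, ← tpair_mul_left, symL1]
    · rw [show K2.sym F 1 1 = 1 from map_one (symHom1 F 1), tpair_one_left]
    · rw [sym_invinv]
    · rw [symA2, symA3 F hw, one_mul]
    · rw [sym_zpow2, sym_zpow1, tpair_zpow_left, tpair_zpow_left,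
        ← tpair_zsmul_right, ← tpair_zsmul_right, hg0 i j hij]
    · rw [symA1, tpair_mul_left]
    · rw [symA2, tpair_mul_left]
  let Φ : K2A F A →* ((∀ k : Fin s, K2 F ⧸ K2.powSubgroup F (r k)) × (Fin (n - s) → K2 F)) :=
    pgLift _ hrel
  have hΦc : ∀ (i : Fin n) (u v : Fˣ),
      Φ (K2A.c F A i u v) = tpair F r (K2.sym F u v) (g0 i) :=
    fun i u v => pgLift_of _ hrel (i, u, v)
  -- the backward homomorphism
  let γ : GGroup A →* (K2 F →* K2A F A) :=
    Glift A (fun i => cHom F A hA hodd i) (fun i j hij => cHom_pow_eq F A hA hodd i j hij)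
  let ΛHom : Multiplicative ((∀ k : Fin s, ZMod (r k)) × (Fin (n - s) → ℤ)) →*
      (K2 F →* K2A F A) := γ.comp (e.symm : _ ≃* _).toMonoidHom
  have hker : ∀ k : Fin s, ∀ x ∈ K2.powSubgroup F (r k),
      ΛHom (Multiplicative.ofAdd (dk (m' := n - s) r k)) x = 1 := by
    intro k x hx
    refine (Subgroup.closure_le
      (MonoidHom.ker (ΛHom (Multiplicative.ofAdd (dk (m' := n - s) r k))))).2 ?_ hx
    rintro y ⟨z, rfl⟩
    show ΛHom (Multiplicative.ofAdd (dk (m' := n - s) r k)) (z ^ (r k)) = 1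
    rw [map_pow, ← MonoidHom.pow_apply, ← map_pow ΛHom, ← ofAdd_nsmul,
      ← natCast_zsmul, rk_smul_dk, ofAdd_zero, map_one, MonoidHom.one_apply]
  let ψ : ∀ k : Fin s, (K2 F ⧸ K2.powSubgroup F (r k)) →* K2A F A :=
    fun k => QuotientGroup.lift _ (ΛHom (Multiplicative.ofAdd (dk (m' := n - s) r k))) (hker k)
  have hψmk : ∀ (k : Fin s) (x : K2 F),
      ψ k (qk F r k x) = ΛHom (Multiplicative.ofAdd (dk (m' := n - s) r k)) x :=
    fun k x => QuotientGroup.lift_mk' _ _ x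
  let Ψ : ((∀ k : Fin s, K2 F ⧸ K2.powSubgroup F (r k)) × (Fin (n - s) → K2 F)) →* K2A F A :=
    MonoidHom.mk' (fun t => (∏ k, ψ k (t.1 k)) *
        ∏ c, ΛHom (Multiplicative.ofAdd (dc (s := s) (r := r) c)) (t.2 c)) (by
      intro a b
      simp only [Prod.fst_mul, Prod.snd_mul, Pi.mul_apply, map_mul]
      rw [Finset.prod_mul_distrib, Finset.prod_mul_distrib]
      exact mul_mul_mul_comm _ _ _ _)
  -- key computation for `Ψ ∘ Φ`
  have hPsi : ∀ (x : K2 F) (g : (∀ k : Fin s, ZMod (r k)) × (Fin (n - s) → ℤ)),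
      Ψ (tpair F r x g) = ΛHom (Multiplicative.ofAdd g) x := by
    intro x g
    show (∏ k, ψ k (zexp (qk F r k x) (g.1 k))) *
        (∏ c, ΛHom (Multiplicative.ofAdd (dc (s := s) (r := r) c)) (x ^ (g.2 c))) = _
    have h1 : ∀ k, ψ k (zexp (qk F r k x) (g.1 k)) =
        ΛHom (Multiplicative.ofAdd (((g.1 k).val : ℤ) • dk (m' := n - s) r k)) x := by
      intro k
      show ψ k ((qk F r k x) ^ (g.1 k).val) = _
      rw [map_pow, hψmk, ← MonoidHom.pow_apply, ← map_pow ΛHom, ← ofAdd_nsmul, ← natCast_zsmul]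
    have h2 : ∀ c, ΛHom (Multiplicative.ofAdd (dc (s := s) (r := r) c)) (x ^ (g.2 c)) =
        ΛHom (Multiplicative.ofAdd ((g.2 c) • dc (s := s) (r := r) c)) x := by
      intro c
      rw [map_zpow (ΛHom (Multiplicative.ofAdd (dc (s := s) (r := r) c))) x (g.2 c),
        ← hom_zpow_apply, ← map_zpow ΛHom, ← ofAdd_zsmul]
    simp only [h1, h2]
    rw [← MonoidHom.finset_prod_apply, ← MonoidHom.finset_prod_apply,
      ← map_prod ΛHom, ← map_prod ΛHom, ← ofAdd_sum, ← ofAdd_sum,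
      ← MonoidHom.mul_apply, ← map_mul, ← ofAdd_add, ← dec r g]
  -- key computation for `Φ ∘ Ψ`
  have hPhiγ : ∀ (h : GGroup A) (x : K2 F),
      Φ (γ h x) = tpair F r x (Multiplicative.toAdd (e h)) := by
    have hΓmul1 : ∀ h₁ h₂ : GGroup A,
        Φ.comp (γ (h₁ * h₂)) = Φ.comp (γ h₁) * Φ.comp (γ h₂) := by
      intro h₁ h₂
      refine MonoidHom.ext fun x => ?_
      simp only [MonoidHom.comp_apply, MonoidHom.mul_apply, map_mul]
    let Γ₁ : GGroup A →* (K2 F →* ((∀ k : Fin s, K2 F ⧸ K2.powSubgroup F (r k)) ×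
        (Fin (n - s) → K2 F))) := MonoidHom.mk' (fun h => Φ.comp (γ h)) hΓmul1
    let Γ₂ : GGroup A →* (K2 F →* ((∀ k : Fin s, K2 F ⧸ K2.powSubgroup F (r k)) ×
        (Fin (n - s) → K2 F))) := MonoidHom.mk'
      (fun h => tpairHom F r (Multiplicative.toAdd (e h))) (by
        intro h₁ h₂
        refine MonoidHom.ext fun x => ?_
        show tpair F r x (Multiplicative.toAdd (e (h₁ * h₂))) =
          tpair F r x (Multiplicative.toAdd (e h₁)) * tpair F r x (Multiplicative.toAdd (e h₂))
        rw [map_mul, toAdd_mul, tpair_add_right])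
    have hΓ : Γ₁ = Γ₂ := by
      apply Gext
      intro i
      apply K2ext
      intro u v
      show Φ (γ (gg A i) (K2.sym F u v)) =
        tpair F r (K2.sym F u v) (Multiplicative.toAdd (e (gg A i)))
      rw [show γ (gg A i) = cHom F A hA hodd i from Glift_gen A _ _ i, cHom_sym, hΦc]
    intro h x
    have h1 : Γ₁ h = Γ₂ h := by rw [hΓ]
    exact DFunLike.congr_fun h1 x
  -- the two maps are mutually inverse
  have hcomp1 : Ψ.comp Φ = MonoidHom.id (K2A F A) := by
    apply K2Aext
    intro i u v
    simp only [MonoidHom.comp_apply, MonoidHom.id_apply]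
    rw [hΦc, hPsi]
    show γ (e.symm (Multiplicative.ofAdd (Multiplicative.toAdd (e (gg A i))))) (K2.sym F u v) =
      K2A.c F A i u v
    rw [ofAdd_toAdd, MulEquiv.symm_apply_apply]
    rw [show γ (gg A i) = cHom F A hA hodd i from Glift_gen A _ _ i, cHom_sym]
  have hcomp2 : Φ.comp Ψ = MonoidHom.id
      ((∀ k : Fin s, K2 F ⧸ K2.powSubgroup F (r k)) × (Fin (n - s) → K2 F)) := by
    have h1 : ∀ (k : Fin s) (y : K2 F ⧸ K2.powSubgroup F (r k)),
        Φ (ψ k y) = (Pi.mulSingle k y, 1) := by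
      intro k y
      refine QuotientGroup.induction_on y fun x => ?_
      show Φ (ψ k (qk F r k x)) = (Pi.mulSingle k (qk F r k x), 1)
      rw [hψmk]
      have h2 := hPhiγ (e.symm (Multiplicative.ofAdd (dk (m' := n - s) r k))) x
      rw [MulEquiv.apply_symm_apply, toAdd_ofAdd] at h2
      exact h2.trans (tpair_dk F r x k)
    have h2 : ∀ (c : Fin (n - s)) (x : K2 F),
        Φ (ΛHom (Multiplicative.ofAdd (dc (s := s) (r := r) c)) x) = (1, Pi.mulSingle c x) := by
      intro c x
      have h3 := hPhiγ (e.symm (Multiplicative.ofAdd (dc (s := s) (r := r) c))) x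
      rw [MulEquiv.apply_symm_apply, toAdd_ofAdd] at h3
      exact h3.trans (tpair_dc F r x c)
    refine MonoidHom.ext fun t => ?_
    simp only [MonoidHom.comp_apply, MonoidHom.id_apply]
    show Φ ((∏ k, ψ k (t.1 k)) *
      ∏ c, ΛHom (Multiplicative.ofAdd (dc (s := s) (r := r) c)) (t.2 c)) = t
    rw [map_mul, map_prod, map_prod]
    simp only [h1, h2]
    have e1 : (∏ k, ((Pi.mulSingle k (t.1 k), 1) :
        (∀ k : Fin s, K2 F ⧸ K2.powSubgroup F (r k)) × (Fin (n - s) → K2 F))) = (t.1, 1) := by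
      refine Prod.ext ?_ ?_
      · rw [Prod.fst_prod]
        exact Finset.univ_prod_mulSingle t.1
      · rw [Prod.snd_prod]
        simp
    have e2 : (∏ c, ((1, Pi.mulSingle c (t.2 c)) :
        (∀ k : Fin s, K2 F ⧸ K2.powSubgroup F (r k)) × (Fin (n - s) → K2 F))) = (1, t.2) := by
      refine Prod.ext ?_ ?_
      · rw [Prod.fst_prod]
        simp
      · rw [Prod.snd_prod]
        exact Finset.univ_prod_mulSingle t.2
    rw [e1, e2]
    refine Prod.ext ?_ ?_ <;> simp
  exact ⟨MonoidHom.toMulEquiv Φ Ψ hcomp1 hcomp2⟩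
end
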